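/- The expected candidate set size under p(s|y) = 2^{−(k−1)} ∑_{j∈s} y_j equals (k+1)/2, independently of y ∈ Δ^{k−1}. -/

import Mathlib

/-!
Exchanging the order of summation gives
`E|S| = 2^{-(k-1)} ∑_j y_j ∑_{s ∋ j} |s|`. The inner sum does not depend on `j`:
the sets containing `j` are `insert j t` with `t ⊆ {1,…,k} \ {j}`, so it equals
`2^{k-1} + (k-1) 2^{k-2} = (k+1) 2^{k-2}`. Hence `E|S| = (k+1)/2 · ∑_j y_j = (k+1)/2`.
-/

open Finset

namespace Finset

variable {α : Type*} [DecidableEq α]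

theorem two_mul_sum_card_powerset (u : Finset α) :
    2 * ∑ t ∈ u.powerset, #t = #u * 2 ^ #u := by
  have hcompl : ∑ t ∈ u.powerset, #(u \ t) = ∑ t ∈ u.powerset, #t :=
    sum_nbij' (u \ ·) (u \ ·) (by simp) (by simp)
      (fun t ht => sdiff_sdiff_eq_self (mem_powerset.1 ht))
      (fun t ht => sdiff_sdiff_eq_self (mem_powerset.1 ht)) (fun _ _ => rfl)
  calc 2 * ∑ t ∈ u.powerset, #t
      = ∑ t ∈ u.powerset, (#(u \ t) + #t) := by rw [sum_add_distrib, hcompl, two_mul]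
    _ = ∑ _t ∈ u.powerset, #u :=
        sum_congr rfl fun t ht => card_sdiff_add_card_eq_card (mem_powerset.1 ht)
    _ = #u * 2 ^ #u := by rw [sum_const, card_powerset, smul_eq_mul, mul_comm]

theorem sum_powerset_insert_filter_mem {β : Type*} [AddCommMonoid β] {j : α} {u : Finset α}
    (hj : j ∉ u) (f : Finset α → β) :
    ∑ s ∈ (insert j u).powerset with j ∈ s, f s = ∑ t ∈ u.powerset, f (insert j t) := by
  have hnot : ∀ t ∈ u.powerset, j ∉ t := fun t ht h => hj (mem_powerset.1 ht h)
  rw [sum_filter, sum_powerset_insert hj, sum_ite_of_false hnot, sum_const_zero, zero_add]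
  exact sum_congr rfl fun t _ => if_pos (mem_insert_self j t)

theorem two_mul_sum_card_powerset_filter_mem {j : α} {u : Finset α} (hj : j ∈ u) :
    2 * ∑ s ∈ u.powerset with j ∈ s, #s = (#u + 1) * 2 ^ (#u - 1) := by
  obtain ⟨v, hjv, rfl⟩ : ∃ v, j ∉ v ∧ u = insert j v :=
    ⟨u.erase j, notMem_erase j u, (insert_erase hj).symm⟩
  have hcard : ∀ t ∈ v.powerset, #(insert j t) = #t + 1 :=
    fun t ht => card_insert_of_notMem fun h => hjv (mem_powerset.1 ht h)
  rw [sum_powerset_insert_filter_mem hjv, sum_congr rfl hcard, sum_add_distrib, mul_add,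
    two_mul_sum_card_powerset, sum_const, card_powerset, smul_eq_mul, mul_one,
    card_insert_of_notMem hjv, Nat.add_sub_cancel]
  ring

theorem sum_powerset_mul_sum {R : Type*} [CommSemiring R] (u : Finset α)
    (f : Finset α → R) (y : α → R) :
    ∑ s ∈ u.powerset, f s * ∑ j ∈ s, y j = ∑ j ∈ u, y j * ∑ s ∈ u.powerset with j ∈ s, f s := by
  simp_rw [mul_sum, mul_comm (y _)]
  refine sum_comm' fun s j => ?_
  rw [mem_filter, mem_powerset]
  exact ⟨fun ⟨hsu, hjs⟩ => ⟨⟨hsu, hjs⟩, hsu hjs⟩, fun ⟨h, _⟩ => h⟩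

end Finset

theorem expected_candidate_set_size_general (k : ℕ)
    (y : Fin k → ℝ) (hy1 : ∑ j, y j = 1)
    (P : Finset (Fin k) → ℝ)
    (hP : ∀ s, P s = (1 / 2 ^ (k - 1)) * ∑ j ∈ s, y j) :
    ∑ s ∈ (Finset.univ : Finset (Fin k)).powerset, (s.card : ℝ) * P s
      = ((k : ℝ) + 1) / 2 := by
  have hcount : ∀ j : Fin k,
      ∑ s ∈ univ.powerset with j ∈ s, (#s : ℝ) = ((k : ℝ) + 1) * 2 ^ (k - 1) / 2 := by
    intro j
    have h := two_mul_sum_card_powerset_filter_mem (mem_univ j)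
    rw [card_univ, Fintype.card_fin] at h
    rw [← Nat.cast_sum, eq_div_iff two_ne_zero, mul_comm]
    exact_mod_cast h
  simp_rw [hP, mul_left_comm _ (1 / 2 ^ (k - 1) : ℝ)]
  rw [← mul_sum, sum_powerset_mul_sum, sum_congr rfl fun j _ => by rw [hcount j], ← sum_mul, hy1]
  field_simp

theorem expected_candidate_set_size (k : ℕ) (hk : 1 ≤ k)
    (y : Fin k → ℝ) (hy0 : ∀ j, 0 ≤ y j) (hy1 : ∑ j, y j = 1)
    (P : Finset (Fin k) → ℝ)
    (hP : ∀ s, P s = (1 / 2 ^ (k - 1)) * ∑ j ∈ s, y j) :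
    ∑ s ∈ (Finset.univ : Finset (Fin k)).powerset, (s.card : ℝ) * P s
      = ((k : ℝ) + 1) / 2 :=
  expected_candidate_set_size_general k y hy1 P hP
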